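/- arXiv:2006.15750 — 3 statements merged into one kernel-verified Lean document; each statement's English description precedes it below -/
import Mathlib

section
/- In a Heyting algebra, every proper filter is the intersection of all prime filters containing it. -/
def IsFilter0 {H : Type*} [HeytingAlgebra H] (F : Set H) : Prop :=
  (⊤ : H) ∈ F ∧ ∀ m m' : H, m ∈ F → (m ⇨ m') ∈ F → m' ∈ F

def IsPrimeFilter0 {H : Type*} [HeytingAlgebra H] (F : Set H) : Prop :=
  IsFilter0 F ∧ (⊥ : H) ∉ F ∧ ∀ m m' : H, m ⊔ m' ∈ F → m ∈ F ∨ m' ∈ F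

lemma IsFilter0.mem_of_le {H : Type*} [HeytingAlgebra H] {F : Set H}
    (hF : IsFilter0 F) {m m' : H} (hm : m ∈ F) (h : m ≤ m') : m' ∈ F := by
  refine hF.2 m m' hm ?_
  have : m ⇨ m' = ⊤ := by rw [himp_eq_top_iff]; exact h
  rw [this]; exact hF.1

lemma IsFilter0.inf_mem {H : Type*} [HeytingAlgebra H] {F : Set H}
    (hF : IsFilter0 F) {m m' : H} (hm : m ∈ F) (hm' : m' ∈ F) : m ⊓ m' ∈ F := by
  have h1 : (m' ⇨ m ⊓ m') ∈ F :=
    hF.mem_of_le hm (by rw [le_himp_iff])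
  exact hF.2 m' (m ⊓ m') hm' h1

lemma extend_filter {H : Type*} [HeytingAlgebra H] {F : Set H} (hF : IsFilter0 F) (a : H) :
    IsFilter0 {y : H | ∃ g ∈ F, g ⊓ a ≤ y} := by
  constructor
  · exact ⟨⊤, hF.1, le_top⟩
  · rintro m m' ⟨g, hg, hle⟩ ⟨g', hg', hle'⟩
    refine ⟨g ⊓ g', hF.inf_mem hg hg', ?_⟩
    have h1 : g ⊓ g' ⊓ a ≤ m := le_trans (by gcongr; exact inf_le_left) hle
    have h2 : g ⊓ g' ⊓ a ≤ m ⇨ m' := le_trans (by gcongr; exact inf_le_right) hle'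
    calc g ⊓ g' ⊓ a ≤ m ⊓ (m ⇨ m') := le_inf h1 h2
      _ ≤ m' := by rw [inf_comm]; exact himp_inf_le

theorem proper_filter_eq_iInter_primes {H : Type*} [HeytingAlgebra H]
    (F : Set H) (hF : IsFilter0 F) (hproper : (⊥ : H) ∉ F) :
    F = {x : H | ∀ P : Set H, IsPrimeFilter0 P → F ⊆ P → x ∈ P} := by
  ext x
  simp only [Set.mem_setOf_eq]
  constructor
  · exact fun hx P _ hFP => hFP hx
  · intro hx
    by_contra hxF
    -- build a filter maximal among filters containing F and missing x
    set S : Set (Set H) := {G | IsFilter0 G ∧ F ⊆ G ∧ x ∉ G} with hS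
    obtain ⟨P, hFP, hPmax⟩ := zorn_subset_nonempty S (fun c hcS hchain hcne => by
      obtain ⟨G0, hG0⟩ := hcne
      refine ⟨⋃₀ c, ⟨⟨Set.mem_sUnion.2 ⟨G0, hG0, (hcS hG0).1.1⟩, ?_⟩, ?_, ?_⟩,
        fun s hs => Set.subset_sUnion_of_mem hs⟩
      · rintro m m' ⟨G1, hG1, hm⟩ ⟨G2, hG2, hm'⟩
        rcases hchain.total hG1 hG2 with h | h
        · exact ⟨G2, hG2, (hcS hG2).1.2 m m' (h hm) hm'⟩
        · exact ⟨G1, hG1, (hcS hG1).1.2 m m' hm (h hm')⟩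
      · exact fun y hy => ⟨G0, hG0, (hcS hG0).2.1 hy⟩
      · rintro ⟨G1, hG1, hxG1⟩
        exact (hcS hG1).2.2 hxG1) F ⟨hF, subset_rfl, hxF⟩
    obtain ⟨hPfil, hFsub, hxP⟩ := hPmax.1
    have hmax : ∀ {G : Set H}, G ∈ S → P ⊆ G → G ⊆ P := fun hG hPG => hPmax.2 hG hPG
    -- P is prime
    have hbot : (⊥ : H) ∉ P := fun h => hxP (hPfil.mem_of_le h bot_le)
    have hprime : ∀ m m' : H, m ⊔ m' ∈ P → m ∈ P ∨ m' ∈ P := by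
      intro a b hab
      by_contra hcon
      push_neg at hcon
      obtain ⟨haP, hbP⟩ := hcon
      -- the filter generated by P ∪ {a} must contain x
      have key : ∀ c : H, c ∉ P → ∃ p ∈ P, p ⊓ c ≤ x := by
        intro c hcP
        set G := {y : H | ∃ g ∈ P, g ⊓ c ≤ y} with hG
        have hGfil := extend_filter hPfil c
        have hPG : P ⊆ G := fun y hy => ⟨y, hy, le_trans inf_le_left le_rfl⟩
        have hcG : c ∈ G := ⟨⊤, hPfil.1, by simp⟩
        have hxG : x ∈ G := by
          by_contra hxG
          have : G ∈ S := ⟨hGfil, subset_trans hFsub hPG, hxG⟩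
          have := hmax this hPG
          exact hcP (this hcG)
        exact hxG
      obtain ⟨p, hp, hpa⟩ := key a haP
      obtain ⟨q, hq, hqb⟩ := key b hbP
      have hpq : p ⊓ q ⊓ (a ⊔ b) ∈ P := hPfil.inf_mem (hPfil.inf_mem hp hq) hab
      have hle : p ⊓ q ⊓ (a ⊔ b) ≤ x := by
        rw [inf_sup_left]
        refine sup_le ?_ ?_
        · exact le_trans (by gcongr; exact inf_le_left) hpa
        · exact le_trans (by gcongr; exact inf_le_right) hqb
      exact hxP (hPfil.mem_of_le hpq hle)
    exact hxP (hx P ⟨hPfil, hbot, hprime⟩ hFsub)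
end

section
/- In a Heyting algebra in which the singleton filter {⊤} is prime (equivalently, the algebra has the Disjunction Property: a ⊔ b = ⊤ implies a = ⊤ or b = ⊤), for all elements a, b: a ≤ b if and only if every prime filter containing a contains b. -/
theorem le_iff_all_primes {H : Type*} [HeytingAlgebra H]
    (hDP : ∀ a b : H, a ⊔ b = ⊤ → a = ⊤ ∨ b = ⊤) (a b : H) :
    a ≤ b ↔ ∀ P : Set H, IsPrimeFilter0 P → a ∈ P → b ∈ P := by
  constructor
  · rintro hab P ⟨⟨htop, hmp⟩, -, -⟩ haP
    exact hmp a b haP (by rwa [himp_eq_top_iff.2 hab])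
  · intro h
    by_contra hab
    have hdisj : Disjoint ((Order.PFilter.principal a : Order.PFilter H) : Set H)
        ((Order.Ideal.principal b : Order.Ideal H) : Set H) := by
      rw [Set.disjoint_left]
      rintro x hx hx'
      exact hab (le_trans (Order.PFilter.mem_principal.1 hx)
        (Order.Ideal.mem_principal.1 hx'))
    obtain ⟨J, hJprime, hIJ, hFJ⟩ :=
      DistribLattice.prime_ideal_of_disjoint_filter_ideal hdisj
    have haJ : a ∉ (J : Set H) := fun h' =>
      Set.disjoint_left.1 hFJ (Order.PFilter.mem_principal.2 le_rfl) h'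
    have hbJ : b ∈ J := hIJ (Order.Ideal.mem_principal.2 le_rfl)
    -- the complement of J is a prime filter
    have hP : IsPrimeFilter0 ((J : Set H)ᶜ) := by
      refine ⟨⟨?_, ?_⟩, ?_, ?_⟩
      · intro hTJ
        exact haJ (J.lower le_top hTJ)
      · intro m m' hm hmp hm'
        have hmem : m ⊓ (m ⇨ m') ∈ J := J.lower inf_himp_le hm'
        rcases hJprime.mem_or_mem hmem with h1 | h1
        · exact hm h1
        · exact hmp h1
      · simp [J.bot_mem]
      · intro m m' hsup
        by_contra hc
        push_neg at hc
        simp only [Set.mem_compl_iff, not_not] at hc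
        exact hsup (J.sup_mem hc.1 hc.2)
    exact (h _ hP haJ) hbJ
end

section
/- In a Heyting algebra with the Disjunction Property, equipped with a unary operation f_K such that for every prime filter F the set BEL(F) = {m | f_K(m) ∈ F} is a filter, the operation f_K is monotone: m ≤ m' implies f_K(m) ≤ f_K(m'). -/
theorem fK_monotone {H : Type*} [HeytingAlgebra H]
    (hDP : ∀ a b : H, a ⊔ b = ⊤ → a = ⊤ ∨ b = ⊤) (fK : H → H)
    (hBel : ∀ F : Set H, IsPrimeFilter0 F → IsFilter0 {m : H | fK m ∈ F}) :
    ∀ m m' : H, m ≤ m' → fK m ≤ fK m' := by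
  intro m m' hmm'
  by_contra hle
  -- separate fK m from fK m' with a prime ideal
  have hdisj : Disjoint ((Order.PFilter.principal (fK m) : Order.PFilter H) : Set H)
      ((Order.Ideal.principal (fK m') : Order.Ideal H) : Set H) := by
    rw [Set.disjoint_left]
    intro x hx hx'
    exact hle (le_trans (Order.PFilter.mem_principal.mp hx) (Order.Ideal.mem_principal.mp hx'))
  obtain ⟨J, hJprime, hIJ, hJdisj⟩ :=
    DistribLattice.prime_ideal_of_disjoint_filter_ideal hdisj
  -- the complement of J is a prime filter in the sense of IsPrimeFilter0
  have hJproper : (⊤ : H) ∉ J := by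
    intro h
    have := hJprime.toIsProper
    exact Order.Ideal.IsProper.ne_univ (I := J) (Set.eq_univ_of_forall fun x => J.lower le_top h)
  have hprime : IsPrimeFilter0 ((J : Set H)ᶜ) := by
    refine ⟨⟨hJproper, ?_⟩, ?_, ?_⟩
    · intro a b ha hab hb
      have hb' : b ∈ J := hb
      have : a ⊓ (a ⇨ b) ∈ J := J.lower (by simp) hb'
      rcases hJprime.mem_or_mem this with h | h
      · exact ha h
      · exact hab h
    · simp [J.bot_mem]
    · intro a b hab
      by_contra h
      push_neg at h
      obtain ⟨ha, hb⟩ := h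
      exact hab (J.sup_mem (not_not.mp ha) (not_not.mp hb))
  obtain ⟨htop, hmp⟩ := hBel _ hprime
  -- fK m ∉ J
  have hfm : fK m ∈ (J : Set H)ᶜ :=
    Set.disjoint_left.mp hJdisj (Order.PFilter.mem_principal.mpr le_rfl)
  -- m ⇨ m' = ⊤, so fK (m ⇨ m') ∉ J
  have himp : (m ⇨ m') = ⊤ := by
    rw [eq_top_iff, le_himp_iff]; simpa using hmm'
  have hfimp : fK (m ⇨ m') ∈ (J : Set H)ᶜ := by
    rw [himp]; exact htop
  have hfm' : fK m' ∈ (J : Set H)ᶜ := hmp m m' hfm hfimp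
  exact hfm' (hIJ (Order.Ideal.mem_principal.mpr le_rfl))
end
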